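/- Let H be a cocommutative Hopf algebra, G ⊆ H a Hopf subalgebra and K ⊆ H a Hopf subalgebra such that H = GK and the multiplication map G⊗K → H is a linear isomorphism. Define B : H → H on elements x = hg (h ∈ G, g ∈ K) by B(hg) = ε(h)S(g). Then B is a well-defined Rota-Baxter operator on H. -/

import Mathlib

open scoped TensorProduct
open Coalgebra

variable (R H : Type*) [CommRing R] [AddCommGroup H] [Module R H] [Coalgebra R H]

/-- A Hopf algebra structure (multiplication, unit, antipode) on the coalgebra `H`:
the multiplication is associative with unit, comultiplication and counit are algebra
maps, and `S` is an antipode (expressed via arbitrary Sweedler representations). -/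
structure HopfMul where
  mul : H →ₗ[R] H →ₗ[R] H
  one : H
  S : H →ₗ[R] H
  mul_assoc : ∀ a b c : H, mul (mul a b) c = mul a (mul b c)
  one_mul : ∀ a : H, mul one a = a
  mul_one : ∀ a : H, mul a one = a
  comul_mul : ∀ (a b : H) {ια ιβ : Type*} (ra : Coalgebra.Repr R a ια) (rb : Coalgebra.Repr R b ιβ),
    comul (R := R) (mul a b) = ∑ i ∈ ra.index, ∑ j ∈ rb.index,
      mul (ra.left i) (rb.left j) ⊗ₜ[R] mul (ra.right i) (rb.right j)
  comul_one : comul (R := R) one = one ⊗ₜ[R] one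
  counit_mul : ∀ a b : H, counit (R := R) (mul a b) = counit (R := R) a * counit (R := R) b
  counit_one : counit (R := R) one = 1
  S_mul_left : ∀ (a : H) {ι : Type*} (r : Coalgebra.Repr R a ι),
    ∑ i ∈ r.index, mul (S (r.left i)) (r.right i) = counit (R := R) a • one
  S_mul_right : ∀ (a : H) {ι : Type*} (r : Coalgebra.Repr R a ι),
    ∑ i ∈ r.index, mul (r.left i) (S (r.right i)) = counit (R := R) a • one

/-- Cocommutativity of the coalgebra `H`. -/
def Cocomm : Prop :=
  ∀ a : H, TensorProduct.comm R H H (comul (R := R) a) = comul (R := R) a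

/-- A Rota-Baxter operator on the (cocommutative) Hopf algebra `(H, h)`: a coalgebra
homomorphism `B` satisfying `B(a)B(b) = B(a₍₁₎·B(a₍₂₎)·b·S(B(a₍₃₎)))`. -/
structure RotaBaxter (h : HopfMul R H) where
  B : H →ₗ[R] H
  comul_B : ∀ (a : H) {ι : Type*} (r : Coalgebra.Repr R a ι),
    comul (R := R) (B a) = ∑ i ∈ r.index, B (r.left i) ⊗ₜ[R] B (r.right i)
  counit_B : ∀ a : H, counit (R := R) (B a) = counit (R := R) a
  rb : ∀ (a b : H) {ι : Type*} (r : Coalgebra.Repr R a ι)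
      {κ : ι → Type*} (r2 : ∀ i : ι, Coalgebra.Repr R (r.right i) (κ i)),
    h.mul (B a) (B b) = ∑ i ∈ r.index, ∑ j ∈ (r2 i).index,
      B (h.mul (h.mul (h.mul (r.left i) (B ((r2 i).left j))) b)
        (h.S (B ((r2 i).right j))))

/-!
Every element of `H` is a sum of products `g k` with `g ∈ G`, `k ∈ K`, so identities that are
linear in an argument need only be checked on such products. As `G` and `K` are subcoalgebras,
`Δ(g k) = g₍₁₎k₍₁₎ ⊗ g₍₂₎k₍₂₎` with all legs in `G` and `K`; since `S` is a coalgebra map of a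
cocommutative Hopf algebra, so is `B`. Hence the right-hand side of the Rota–Baxter identity is
`B(a₍₁₎ · ad_{B(a₍₂₎)} b)`, where `ad_c b = c₍₁₎ b S(c₍₂₎)`. For `a = g k` the factor
`B(g₍₂₎k₍₂₎) = ε(g₍₂₎) S(k₍₂₎)` collapses the `G`-legs, and
`k₍₁₎ · ad_{S(k₍₂₎)} b = k₍₁₎ S(k₍₂₎) b k₍₃₎ = b k`, leaving `B(g b k)`. Finally
`B(g b k) = ε(g) S(k) B(b) = B(g k) B(b)`, checked on `b = g' k'` using `S(k' k) = S(k) S(k')`.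
-/

open Coalgebra TensorProduct WithConv

universe w

namespace Coalgebra

section CoalgebraStruct

variable {R C : Type*} [CommSemiring R] [AddCommMonoid C] [Module R C] [CoalgebraStruct R C]
  {a : C} {ι : Type*}

/-- The axioms of `HopfMul` quantify over representations indexed in one fixed universe. -/
noncomputable def Repr.uLiftFin (r : Repr R a ι) : Repr R a (ULift.{w} (Fin r.index.card)) where
  index := Finset.univ
  left i := r.left (r.index.equivFin.symm i.down)
  right i := r.right (r.index.equivFin.symm i.down)
  eq := by
    rw [← r.eq, ← Finset.sum_coe_sort r.index]
    exact Fintype.sum_equiv (Equiv.ulift.trans r.index.equivFin.symm) _ _ fun _ => rfl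

lemma Repr.sum_uLiftFin {M : Type*} [AddCommMonoid M] (r : Repr R a ι) (f : C → C → M) :
    ∑ i ∈ r.uLiftFin.{w}.index, f (r.uLiftFin.left i) (r.uLiftFin.right i) =
      ∑ i ∈ r.index, f (r.left i) (r.right i) := by
  rw [← Finset.sum_coe_sort r.index]
  exact Fintype.sum_equiv (Equiv.ulift.trans r.index.equivFin.symm) _ _ fun _ => rfl

end CoalgebraStruct

variable {R C : Type*} [CommSemiring R] [AddCommMonoid C] [Module R C] [Coalgebra R C]
  {a : C} {ι : Type*}

lemma sum_smul_counit (r : Repr R a ι) :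
    ∑ i ∈ r.index, counit (R := R) (r.right i) • r.left i = a := by
  simpa only [map_sum, TensorProduct.rid_tmul, one_smul] using
    congr(TensorProduct.rid R R C $(sum_tmul_counit_eq r))

@[simps]
def Repr.swap [IsCocomm R C] (r : Repr R a ι) : Repr R a ι where
  index := r.index
  left := r.right
  right := r.left
  eq := by rw [← comm_comul R a, ← r.eq, map_sum]; simp

end Coalgebra

namespace HopfMul

variable {R H} (h : HopfMul R H)

abbrev toRing : Ring H :=
  { (inferInstance : AddCommGroup H) with
    mul a b := h.mul a b
    one := h.one
    mul_assoc := h.mul_assoc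
    one_mul := h.one_mul
    mul_one := h.mul_one
    left_distrib a := map_add (h.mul a)
    right_distrib := LinearMap.map_add₂ h.mul
    zero_mul := LinearMap.map_zero₂ h.mul
    mul_zero a := map_zero (h.mul a) }

abbrev toAlgebra : letI := h.toRing; Algebra R H :=
  letI := h.toRing
  Algebra.ofModule (LinearMap.map_smul₂ h.mul) fun r x y => map_smul (h.mul x) r y

abbrev toBialgebra : letI := h.toRing; Bialgebra R H :=
  letI := h.toRing
  letI := h.toAlgebra
  Bialgebra.mk' R H h.counit_one (h.counit_mul _ _) h.comul_one fun {a b} => by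
    rw [show a * b = h.mul a b from rfl, h.comul_mul a b (ℛ R a).uLiftFin (ℛ R b).uLiftFin,
      ← (ℛ R a).uLiftFin.eq, ← (ℛ R b).uLiftFin.eq, Finset.sum_mul_sum]
    simp only [Algebra.TensorProduct.tmul_mul_tmul]
    rfl

abbrev toHopfAlgebra : letI := h.toRing; HopfAlgebra R H :=
  letI := h.toRing
  letI := h.toAlgebra
  letI := h.toBialgebra
  { antipode := h.S
    mul_antipode_rTensor_comul := by
      ext a
      have key :=
        ((ℛ R a).sum_uLiftFin fun x y => h.mul (h.S x) y).symm.trans (h.S_mul_left a _)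
      simp only [LinearMap.comp_apply, ← (ℛ R a).eq, map_sum, LinearMap.rTensor_tmul,
        LinearMap.mul'_apply, Algebra.linearMap_apply, Algebra.algebraMap_eq_smul_one]
      exact key
    mul_antipode_lTensor_comul := by
      ext a
      have key :=
        ((ℛ R a).sum_uLiftFin fun x y => h.mul x (h.S y)).symm.trans (h.S_mul_right a _)
      simp only [LinearMap.comp_apply, ← (ℛ R a).eq, map_sum, LinearMap.lTensor_tmul,
        LinearMap.mul'_apply, Algebra.linearMap_apply, Algebra.algebraMap_eq_smul_one]
      exact key }

end HopfMul

namespace Submodule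

variable {R : Type*} [CommSemiring R]

def IsSubcoalgebra {C : Type*} [AddCommMonoid C] [Module R C] [CoalgebraStruct R C]
    (G : Submodule R C) : Prop :=
  ∀ a ∈ G, comul (R := R) a ∈ LinearMap.range (TensorProduct.map G.subtype G.subtype)

lemma IsSubcoalgebra.exists_repr {C : Type*} [AddCommMonoid C] [Module R C] [CoalgebraStruct R C]
    {G : Submodule R C} (hG : G.IsSubcoalgebra) {a : C} (ha : a ∈ G) :
    ∃ r : Repr R a (G × G), ∀ i, r.left i ∈ G ∧ r.right i ∈ G := by
  obtain ⟨t, ht⟩ := hG a ha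
  obtain ⟨s, rfl⟩ := TensorProduct.exists_finset t
  exact ⟨⟨s, fun p => p.1, fun p => p.2, by rw [← ht, map_sum]; simp⟩, fun p => ⟨p.1.2, p.2.2⟩⟩

variable {A : Type*} [Semiring A] [Algebra R A] {G K : Submodule R A}

lemma mul_eq_top_of_surjective
    (hGK : Function.Surjective (lift (((LinearMap.mul R A).domRestrict G).compl₂ K.subtype))) :
    G * K = ⊤ := by
  rw [eq_top_iff]
  rintro a -
  obtain ⟨t, rfl⟩ := hGK a
  induction t using TensorProduct.induction_on with
  | zero => simp
  | tmul g k => exact mul_mem_mul g.2 k.2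
  | add x y hx hy => rw [map_add]; exact add_mem hx hy

end Submodule

lemma LinearMap.ext_of_mul_eq_top {R A M : Type*} [CommSemiring R] [Semiring A] [Algebra R A]
    [AddCommMonoid M] [Module R M] {G K : Submodule R A} (hGK : G * K = ⊤) {f f' : A →ₗ[R] M}
    (h : ∀ g ∈ G, ∀ k ∈ K, f (g * k) = f' (g * k)) : f = f' :=
  ext_on (by rw [← Submodule.mul_eq_span_mul_set, hGK])
    (by rintro _ ⟨g, hg, k, hk, rfl⟩; exact h g hg k hk)

namespace HopfAlgebra

variable {R A : Type*} [CommSemiring R] [Semiring A] [HopfAlgebra R A]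

variable (R) in
noncomputable def adAction (b : A) : A →ₗ[R] A :=
  LinearMap.mul' R A ∘ₗ TensorProduct.map (LinearMap.mulRight R b) (antipode R) ∘ₗ comul

lemma _root_.Coalgebra.Repr.adAction_apply {c : A} {ι : Type*} (r : Repr R c ι) (b : A) :
    adAction R b c = ∑ i ∈ r.index, r.left i * b * antipode R (r.right i) := by
  simp [adAction, ← r.eq]

section Cocomm

variable [IsCocomm R A]

lemma antipode_comp_antipode : antipode R ∘ₗ antipode R = (LinearMap.id : A →ₗ[R] A) := by
  have h : toConv (antipode R ∘ₗ antipode R) * toConv (antipode R) =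
      (1 : WithConv (A →ₗ[R] A)) := by
    ext a
    have := sum_mul_antipode_eq_smul (ℛ R a).swap
    simp only [Repr.swap_index, Repr.swap_left, Repr.swap_right] at this
    rw [(ℛ R a).convMul_apply]
    simp only [LinearMap.comp_apply, ← antipode_mul_antidistrib, ← map_sum, this]
    simp [Algebra.algebraMap_eq_smul_one]
  exact congrArg ofConv (left_inv_eq_right_inv h LinearMap.antipode_mul_id)

@[simp] lemma antipode_antipode (a : A) : antipode R (antipode R a) = a :=
  LinearMap.congr_fun antipode_comp_antipode a

/-- By cocommutativity `Δ` is a coalgebra map, so `(S ⊗ S) ∘ Δ` is a left convolution inverse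
of `Δ`; `Δ ∘ S` is a right one. -/
lemma map_antipode_comp_comul :
    TensorProduct.map (antipode R) (antipode R) ∘ₗ comul = comul ∘ₗ (antipode R : A →ₗ[R] A) := by
  have one :
      TensorProduct.map (1 : WithConv (A →ₗ[R] A)).ofConv (1 : WithConv (A →ₗ[R] A)).ofConv =
      (1 : WithConv (A ⊗[R] A →ₗ[R] A ⊗[R] A)).ofConv := by
    ext x y
    simp [Algebra.algebraMap_eq_smul_one, smul_tmul', smul_smul, mul_comm,
      Algebra.TensorProduct.one_def]
  have h : toConv (TensorProduct.map (antipode R) (antipode R) ∘ₗ comul) * toConv comul =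
      (1 : WithConv (A →ₗ[R] A ⊗[R] A)) := by
    have := LinearMap.convMul_comp_coalgHom_distrib
      (toConv (TensorProduct.map (antipode R) (antipode R)))
      (toConv (TensorProduct.map LinearMap.id LinearMap.id)) (comulCoalgHom R A)
    rw [map_convMul_map, LinearMap.antipode_mul_id, one, LinearMap.convOne_comp_coalgHom,
      map_id, LinearMap.id_comp] at this
    exact ofConv_injective this.symm
  exact congrArg ofConv (left_inv_eq_right_inv h LinearMap.comul_right_inv)

lemma comul_antipode (a : A) :
    comul (antipode R a) = TensorProduct.map (antipode R) (antipode R) (comul a) :=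
  (LinearMap.congr_fun map_antipode_comp_comul a).symm

lemma _root_.Coalgebra.Repr.adAction_antipode {c : A} {ι : Type*} (r : Repr R c ι) (b : A) :
    adAction R b (antipode R c) = ∑ i ∈ r.index, antipode R (r.left i) * b * r.right i := by
  simp [adAction, comul_antipode, ← r.eq]

lemma _root_.Coalgebra.Repr.sum_mul_adAction_antipode {c : A} {ι : Type*} (r : Repr R c ι)
    (b : A) : ∑ i ∈ r.index, r.left i * adAction R b (antipode R (r.right i)) = b * c := by
  let Φ : A ⊗[R] (A ⊗[R] A) →ₗ[R] A := LinearMap.mul' R A ∘ₗ LinearMap.lTensor A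
    (LinearMap.mul' R A ∘ₗ TensorProduct.map (LinearMap.mulRight R b ∘ₗ antipode R) LinearMap.id)
  have coassoc :=
    congr(Φ $(sum_tmul_tmul_eq r (fun i => ℛ R (r.left i)) fun i => ℛ R (r.right i)))
  simp only [Φ, map_sum, LinearMap.comp_apply, LinearMap.lTensor_tmul, TensorProduct.map_tmul,
    LinearMap.mul'_apply, LinearMap.mulRight_apply, LinearMap.id_apply] at coassoc
  calc ∑ i ∈ r.index, r.left i * adAction R b (antipode R (r.right i))
      = ∑ i ∈ r.index, ∑ j ∈ (ℛ R (r.right i)).index,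
          r.left i * (antipode R ((ℛ R (r.right i)).left j) * b * (ℛ R (r.right i)).right j) := by
        simp_rw [(ℛ R _).adAction_antipode, Finset.mul_sum]
    _ = ∑ i ∈ r.index, ∑ j ∈ (ℛ R (r.left i)).index,
          (ℛ R (r.left i)).left j * (antipode R ((ℛ R (r.left i)).right j) * b * r.right i) :=
        coassoc.symm
    _ = ∑ i ∈ r.index, counit (R := R) (r.left i) • (b * r.right i) := by
        refine Finset.sum_congr rfl fun i _ => ?_
        simp_rw [← mul_assoc, ← Finset.sum_mul, sum_mul_antipode_eq_smul, smul_mul_assoc, one_mul]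
    _ = b * c := by
        simp_rw [← mul_smul_comm, ← Finset.mul_sum, sum_counit_smul]

end Cocomm

structure IsFactorizationOperator (G K : Submodule R A) (B : A →ₗ[R] A) : Prop where
  mul_eq_top : G * K = ⊤
  apply_mul : ∀ g ∈ G, ∀ k ∈ K, B (g * k) = counit (R := R) g • antipode R k

namespace IsFactorizationOperator

variable {G K : Submodule R A} {B : A →ₗ[R] A}

lemma counit_comp (hB : IsFactorizationOperator G K B) : counit ∘ₗ B = counit := by
  refine LinearMap.ext_of_mul_eq_top hB.mul_eq_top fun g hg k hk => ?_
  simp [hB.apply_mul g hg k hk]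

lemma apply_mul_mul (hB : IsFactorizationOperator G K B) (hG : G * G ≤ G) (hK : K * K ≤ K)
    {g k : A} (hg : g ∈ G) (hk : k ∈ K) (b : A) :
    B (g * b * k) = counit (R := R) g • (antipode R k * B b) := by
  have := LinearMap.ext_of_mul_eq_top hB.mul_eq_top
    (f := B ∘ₗ LinearMap.mulRight R k ∘ₗ LinearMap.mulLeft R g)
    (f' := counit (R := R) g • LinearMap.mulLeft R (antipode R k) ∘ₗ B) fun g' hg' k' hk' => by
      have hgg' := hG (Submodule.mul_mem_mul hg hg')
      have hk'k := hK (Submodule.mul_mem_mul hk' hk)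
      simp only [LinearMap.comp_apply, LinearMap.mulLeft_apply, LinearMap.mulRight_apply,
        LinearMap.smul_apply, hB.apply_mul g' hg' k' hk']
      rw [← mul_assoc, mul_assoc, hB.apply_mul _ hgg' _ hk'k]
      simp [antipode_mul_antidistrib, smul_smul]
  exact LinearMap.congr_fun this b

variable [IsCocomm R A]

lemma comul_comp (hB : IsFactorizationOperator G K B) (hGc : G.IsSubcoalgebra)
    (hKc : K.IsSubcoalgebra) :
    comul ∘ₗ B = TensorProduct.map B B ∘ₗ comul := by
  refine LinearMap.ext_of_mul_eq_top hB.mul_eq_top fun g hg k hk => ?_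
  obtain ⟨rg, hrg⟩ := hGc.exists_repr hg
  obtain ⟨rk, hrk⟩ := hKc.exists_repr hk
  have hε : ∑ i ∈ rg.index, counit (R := R) (rg.left i) * counit (R := R) (rg.right i) =
      counit (R := R) g := by
    simpa using congr(counit (R := R) $(sum_counit_smul rg))
  rw [LinearMap.comp_apply, LinearMap.comp_apply, ← (rg.mul rk).eq, hB.apply_mul g hg k hk,
    map_smul, comul_antipode, ← rk.eq, ← hε]
  simp only [Repr.mul_index, Repr.mul_left, Repr.mul_right, Finset.sum_product, map_sum,
    TensorProduct.map_tmul, hB.apply_mul _ (hrg _).1 _ (hrk _).1,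
    hB.apply_mul _ (hrg _).2 _ (hrk _).2, Finset.sum_smul, Finset.smul_sum, smul_tmul_smul]
  exact Finset.sum_comm

lemma apply_mul_apply_eq_sum_adAction (hB : IsFactorizationOperator G K B) (hG : G * G ≤ G)
    (hK : K * K ≤ K) (hGc : G.IsSubcoalgebra) (hKc : K.IsSubcoalgebra) (a b : A) {ι : Type*}
    (r : Repr R a ι) :
    B a * B b = ∑ i ∈ r.index, B (r.left i * adAction R b (B (r.right i))) := by
  let Ψ : A ⊗[R] A →ₗ[R] A :=
    B ∘ₗ LinearMap.mul' R A ∘ₗ TensorProduct.map LinearMap.id (adAction R b ∘ₗ B)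
  suffices LinearMap.mulRight R (B b) ∘ₗ B = Ψ ∘ₗ comul by
    simpa [Ψ, ← r.eq] using LinearMap.congr_fun this a
  refine LinearMap.ext_of_mul_eq_top hB.mul_eq_top fun g hg k hk => ?_
  obtain ⟨rg, hrg⟩ := hGc.exists_repr hg
  obtain ⟨rk, hrk⟩ := hKc.exists_repr hk
  symm
  calc Ψ (comul (g * k))
      = ∑ i ∈ rg.index, ∑ j ∈ rk.index,
          B (rg.left i * rk.left j * adAction R b (B (rg.right i * rk.right j))) := by
        simp [Ψ, ← (rg.mul rk).eq, Finset.sum_product]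
    _ = ∑ j ∈ rk.index, ∑ i ∈ rg.index, counit (R := R) (rg.right i) •
          B (rg.left i * (rk.left j * adAction R b (antipode R (rk.right j)))) := by
        rw [Finset.sum_comm]
        simp_rw [hB.apply_mul _ (hrg _).2 _ (hrk _).2, map_smul, mul_smul_comm, map_smul,
          mul_assoc]
    _ = B (g * (b * k)) := by
        simp_rw [← map_smul, ← smul_mul_assoc, ← map_sum, ← Finset.sum_mul, sum_smul_counit,
          ← Finset.mul_sum, rk.sum_mul_adAction_antipode]
    _ = B (g * k) * B b := by
        rw [← mul_assoc, hB.apply_mul_mul hG hK hg hk, hB.apply_mul g hg k hk, smul_mul_assoc]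

noncomputable def toCoalgHom (hB : IsFactorizationOperator G K B) (hGc : G.IsSubcoalgebra)
    (hKc : K.IsSubcoalgebra) : A →ₗc[R] A where
  __ := B
  counit_comp := hB.counit_comp
  map_comp_comul := (hB.comul_comp hGc hKc).symm

@[simp] lemma coe_toCoalgHom (hB : IsFactorizationOperator G K B) (hGc : G.IsSubcoalgebra)
    (hKc : K.IsSubcoalgebra) : ⇑(hB.toCoalgHom hGc hKc) = B := rfl

lemma apply_mul_apply_eq_sum (hB : IsFactorizationOperator G K B) (hG : G * G ≤ G)
    (hK : K * K ≤ K) (hGc : G.IsSubcoalgebra) (hKc : K.IsSubcoalgebra) (a b : A) {ι : Type*}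
    (r : Repr R a ι) {κ : ι → Type*} (r₂ : ∀ i, Repr R (r.right i) (κ i)) :
    B a * B b = ∑ i ∈ r.index, ∑ j ∈ (r₂ i).index,
      B (r.left i * B ((r₂ i).left j) * b * antipode R (B ((r₂ i).right j))) := by
  rw [hB.apply_mul_apply_eq_sum_adAction hG hK hGc hKc a b r]
  refine Finset.sum_congr rfl fun i _ => ?_
  have hB_ad := ((r₂ i).induced (hB.toCoalgHom hGc hKc)).adAction_apply b
  simp only [Repr.induced_index, Repr.induced_left, Repr.induced_right, coe_toCoalgHom,
    Function.comp_apply] at hB_ad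
  simp only [hB_ad, Finset.mul_sum, map_sum, mul_assoc]

end IsFactorizationOperator

end HopfAlgebra

theorem factorization_rotaBaxter (h : HopfMul R H) (hc : Cocomm R H)
    (G K : Submodule R H)
    (hGmul : ∀ a ∈ G, ∀ b ∈ G, h.mul a b ∈ G)
    (hGcomul : ∀ a ∈ G, comul (R := R) a ∈
      LinearMap.range (TensorProduct.map G.subtype G.subtype))
    (hKmul : ∀ a ∈ K, ∀ b ∈ K, h.mul a b ∈ K)
    (hKcomul : ∀ a ∈ K, comul (R := R) a ∈
      LinearMap.range (TensorProduct.map K.subtype K.subtype))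
    (hbij : Function.Bijective
      (TensorProduct.lift ((h.mul.domRestrict G).compl₂ K.subtype)))
    (Bmap : H →ₗ[R] H)
    (hB : ∀ (g : G) (k : K),
      Bmap (h.mul (g : H) (k : H)) = counit (R := R) (g : H) • h.S (k : H)) :
    ∃ rb : RotaBaxter R H h, rb.B = Bmap := by
  let := h.toRing
  let := h.toAlgebra
  let := h.toHopfAlgebra
  have : IsCocomm R H := ⟨LinearMap.ext hc⟩
  have hBmap : HopfAlgebra.IsFactorizationOperator G K Bmap :=
    ⟨Submodule.mul_eq_top_of_surjective hbij.2, fun g hg k hk => hB ⟨g, hg⟩ ⟨k, hk⟩⟩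
  have hG : G * G ≤ G := Submodule.mul_le.2 hGmul
  have hK : K * K ≤ K := Submodule.mul_le.2 hKmul
  let φ := hBmap.toCoalgHom hGcomul hKcomul
  exact ⟨⟨Bmap, fun a _ r => (r.induced φ).eq.symm, CoalgHomClass.counit_comp_apply φ,
    fun a b _ r _ r₂ => hBmap.apply_mul_apply_eq_sum hG hK hGcomul hKcomul a b r r₂⟩, rfl⟩
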